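/- Let B ∈ C² with div(B) = 0 and B(y) ≠ 0 for all y ∈ ℝ³, fix x₀, v₀ ∈ ℝ³, set h_ω(t) := v_ω(t) · b(x_ω(t)) and define the particle's magnetic moment μ_ω(t) := (|v₀|² − h_ω(t)²)/(2|B(x_ω(t))|). Then for every T > 0, sup_{t ∈ [0,T]} |μ_ω(t) − μ₀| → 0 as ω → ∞; i.e. the magnetic moment converges uniformly on compact time intervals to the constant μ₀ (adiabatic invariance of the magnetic moment). -/

import Mathlib

noncomputable section

open Real Filter Topology MeasureTheory intervalIntegral Bornology

abbrev E3 : Type := EuclideanSpace ℝ (Fin 3)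

def cross3 (u v : E3) : E3 :=
  (WithLp.equiv 2 (Fin 3 → ℝ)).symm
    ![u 1 * v 2 - u 2 * v 1, u 2 * v 0 - u 0 * v 2, u 0 * v 1 - u 1 * v 0]

def divg (F : E3 → E3) (y : E3) : ℝ :=
  ∑ i : Fin 3, fderiv ℝ F y (EuclideanSpace.single i (1:ℝ)) i

def curl3 (F : E3 → E3) (y : E3) : E3 :=
  (WithLp.equiv 2 (Fin 3 → ℝ)).symm
    ![fderiv ℝ F y (EuclideanSpace.single 1 (1:ℝ)) 2 - fderiv ℝ F y (EuclideanSpace.single 2 (1:ℝ)) 1,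
      fderiv ℝ F y (EuclideanSpace.single 2 (1:ℝ)) 0 - fderiv ℝ F y (EuclideanSpace.single 0 (1:ℝ)) 2,
      fderiv ℝ F y (EuclideanSpace.single 0 (1:ℝ)) 1 - fderiv ℝ F y (EuclideanSpace.single 1 (1:ℝ)) 0]

def bdir (B : E3 → E3) (y : E3) : E3 := ‖B y‖⁻¹ • B y

def IsLorentzSol (B : E3 → E3) (ω : ℝ) (x₀ v₀ : E3) (x : ℝ → E3) : Prop :=
  x 0 = x₀ ∧ deriv x 0 = v₀ ∧ Differentiable ℝ x ∧
    ∀ t : ℝ, HasDerivAt (deriv x) (ω • cross3 (deriv x t) (B (x t))) t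

def IsLimitSol (B : E3 → E3) (x₀ v₀ : E3) (x : ℝ → E3) (h : ℝ → ℝ) : Prop :=
  x 0 = x₀ ∧ h 0 = (inner ℝ v₀ (bdir B x₀) : ℝ) ∧
    (∀ t : ℝ, HasDerivAt x (h t • bdir B (x t)) t) ∧
    (∀ t : ℝ, HasDerivAt h ((‖v₀‖ ^ 2 - h t ^ 2) / 2 * divg (bdir B) (x t)) t)

def IsCkBounded (k : ℕ) (B : E3 → E3) : Prop :=
  ContDiff ℝ k B ∧ ∀ i ≤ k, ∃ M : ℝ, ∀ y : E3, ‖iteratedFDeriv ℝ i B y‖ ≤ M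

def MinimalGrowth (γ : ℝ) (B : E3 → E3) : Prop :=
  ∃ R C : ℝ, 0 < R ∧ 0 < C ∧ ∀ y : E3, R ≤ ‖y‖ → C / ‖y‖ ^ γ ≤ ‖B y‖

/-!
Write the Lorentz flow on phase space as `γ' = a(γ) + ω f(γ)`, with drift `a(x, v) = (v, 0)` and
gyration `f(x, v) = (0, v × B x)`. The gyration conserves `‖v‖` and the parallel velocity, hence the
magnetic moment `μ`. The drift derivative of `μ` is not small, but on the energy shell it is a
pure gyrophase derivative, `Dμ·a + DΨ·f = 0` for an explicit `Ψ`, because its gyro-average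
vanishes: that average involves the trace of `Db` computed in the frame `u, u × b, b`, and
`div B = 0` gives `div b = -∂_b ‖B‖ / ‖B‖`. Then `μ + Ψ / ω` has derivative `DΨ·a / ω` along the trajectory. Up to time `T` the trajectory
stays in the compact set `closedBall x₀ (‖v₀‖ T) × sphere 0 ‖v₀‖`, where `DΨ·a` and `Ψ` are
bounded, so `|μ(t) - μ₀| = O(1 / ω)` uniformly on `[0, T]`.
-/

open scoped RealInnerProductSpace

theorem cross3_apply_zero (u v : E3) : cross3 u v 0 = u 1 * v 2 - u 2 * v 1 := rfl
theorem cross3_apply_one (u v : E3) : cross3 u v 1 = u 2 * v 0 - u 0 * v 2 := rfl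
theorem cross3_apply_two (u v : E3) : cross3 u v 2 = u 0 * v 1 - u 1 * v 0 := rfl

theorem inner_eq_sum_three (u v : E3) : ⟪u, v⟫ = u 0 * v 0 + u 1 * v 1 + u 2 * v 2 := by
  simp [PiLp.inner_apply, Fin.sum_univ_three, mul_comm]

theorem E3.ext_three {u v : E3} (h₀ : u 0 = v 0) (h₁ : u 1 = v 1) (h₂ : u 2 = v 2) : u = v := by
  ext i; fin_cases i <;> assumption

def crossL : E3 →L[ℝ] E3 →L[ℝ] E3 :=
  LinearMap.toContinuousLinearMap
    { toFun := fun u => LinearMap.toContinuousLinearMap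
        ((WithLp.linearEquiv 2 ℝ (Fin 3 → ℝ)).symm.toLinearMap ∘ₗ
          crossProduct (WithLp.linearEquiv 2 ℝ (Fin 3 → ℝ) u) ∘ₗ
          (WithLp.linearEquiv 2 ℝ (Fin 3 → ℝ)).toLinearMap)
      map_add' := fun u u' => by ext v : 1; simp
      map_smul' := fun r u => by ext v : 1; simp }

theorem crossL_apply (u v : E3) : crossL u v = cross3 u v := rfl

@[fun_prop]
theorem ContDiff.cross3 {F : Type*} [NormedAddCommGroup F] [NormedSpace ℝ F] {n : WithTop ℕ∞}
    {f g : F → E3} (hf : ContDiff ℝ n f) (hg : ContDiff ℝ n g) :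
    ContDiff ℝ n fun p => cross3 (f p) (g p) :=
  (crossL.contDiff.comp hf).clm_apply hg

theorem cross3_self (u : E3) : cross3 u u = 0 := by
  apply E3.ext_three <;> simp [cross3_apply_zero, cross3_apply_one, cross3_apply_two] <;> ring

theorem cross3_add_smul_left (u z v : E3) (s : ℝ) :
    cross3 (u + s • z) v = cross3 u v + s • cross3 z v := by
  simp only [← crossL_apply, map_add, map_smul, add_apply, smul_apply]

theorem cross3_smul_left (r : ℝ) (u v : E3) : cross3 (r • u) v = r • cross3 u v := by
  simp only [← crossL_apply, map_smul, smul_apply]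

theorem cross3_smul_right (r : ℝ) (u v : E3) : cross3 u (r • v) = r • cross3 u v := by
  simp only [← crossL_apply, map_smul]

theorem inner_self_cross3 (u v : E3) : ⟪u, cross3 u v⟫ = 0 := by
  rw [inner_eq_sum_three, cross3_apply_zero, cross3_apply_one, cross3_apply_two]; ring

theorem inner_cross3_self (u v : E3) : ⟪cross3 u v, v⟫ = 0 := by
  rw [inner_eq_sum_three, cross3_apply_zero, cross3_apply_one, cross3_apply_two]; ring

theorem cross3_cross3_left (u v : E3) :
    cross3 (cross3 u v) v = ⟪u, v⟫ • v - ⟪v, v⟫ • u := by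
  apply E3.ext_three <;>
    simp only [cross3_apply_zero, cross3_apply_one, cross3_apply_two, PiLp.sub_apply,
      PiLp.smul_apply, smul_eq_mul, inner_eq_sum_three] <;> ring

theorem map_eq_sum_smul_single {G : Type*} [AddCommGroup G] [Module ℝ G] [TopologicalSpace G]
    (M : E3 →L[ℝ] G) (z : E3) : M z = ∑ j : Fin 3, z j • M (EuclideanSpace.single j 1) := by
  conv_lhs => rw [← (EuclideanSpace.basisFun (Fin 3) ℝ).sum_repr z]
  simp

theorem apply_eq_sum_three (Q : E3 →L[ℝ] E3) (z : E3) (i : Fin 3) :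
    Q z i = ∑ j : Fin 3, z j * Q (EuclideanSpace.single j 1) i := by
  rw [map_eq_sum_smul_single Q z]
  simp

/-- `u`, `u × b`, `‖u‖ b` are orthogonal of common length `‖u‖`, so the left side is `‖u‖²` times
the trace of `Q`. -/
theorem trace_eq_frame_sum (Q : E3 →L[ℝ] E3) {u b : E3} (hub : ⟪u, b⟫ = 0) (hb : ‖b‖ = 1) :
    ⟪u, Q u⟫ + ⟪cross3 u b, Q (cross3 u b)⟫ + ‖u‖ ^ 2 * ⟪b, Q b⟫ =
      ‖u‖ ^ 2 * ∑ i : Fin 3, Q (EuclideanSpace.single i 1) i := by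
  have hbb : ⟪b, b⟫ = 1 := by rw [real_inner_self_eq_norm_sq, hb, one_pow]
  rw [← real_inner_self_eq_norm_sq]
  linear_combination (norm := skip)
    (⟪u, Q b⟫ + ⟪b, Q u⟫ - ⟪u, b⟫ * ∑ i : Fin 3, Q (EuclideanSpace.single i 1) i) * hub +
      (⟪u, u⟫ * ∑ i : Fin 3, Q (EuclideanSpace.single i 1) i - ⟪u, Q u⟫) * hbb
  simp only [inner_eq_sum_three, apply_eq_sum_three Q u, apply_eq_sum_three Q b,
    apply_eq_sum_three Q (cross3 u b), Fin.sum_univ_three, cross3_apply_zero, cross3_apply_one,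
    cross3_apply_two]
  ring

theorem divg_smul {f : E3 → ℝ} {F : E3 → E3} {y : E3} (hf : DifferentiableAt ℝ f y)
    (hF : DifferentiableAt ℝ F y) :
    divg (fun y => f y • F y) y = fderiv ℝ f y (F y) + f y * divg F y := by
  simp only [divg, fderiv_fun_smul hf hF, add_apply, smul_apply,
    ContinuousLinearMap.smulRight_apply, PiLp.add_apply, PiLp.smul_apply, smul_eq_mul,
    Finset.sum_add_distrib, ← Finset.mul_sum, map_eq_sum_smul_single (fderiv ℝ f y) (F y)]
  simp only [mul_comm]
  ring

theorem inner_fderiv_eq_zero_of_norm_eq_one {E F : Type*} [NormedAddCommGroup E]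
    [NormedSpace ℝ E] [NormedAddCommGroup F] [InnerProductSpace ℝ F] {f : E → F} {y : E}
    (hf : DifferentiableAt ℝ f y) (h1 : ∀ y, ‖f y‖ = 1) (z : E) : ⟪f y, fderiv ℝ f y z⟫ = 0 := by
  have hline : HasDerivAt (fun s : ℝ => f (y + s • z)) (fderiv ℝ f y z) 0 :=
    hf.hasFDerivAt.hasLineDerivAt z
  have hsq := hline.inner ℝ hline
  simp only [zero_smul, add_zero, real_inner_self_eq_norm_sq, h1, one_pow] at hsq
  have := hsq.unique (hasDerivAt_const 0 1)
  rw [real_inner_comm (f y)] at this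
  linarith

attribute [fun_prop] ContDiff.inner

-- `ContDiff.norm` with the scalar field fixed to `ℝ`, which `fun_prop` cannot infer.
@[fun_prop]
theorem ContDiff.norm_of_ne_zero {E F : Type*} [NormedAddCommGroup E] [NormedSpace ℝ E]
    [NormedAddCommGroup F] [InnerProductSpace ℝ F] {n : WithTop ℕ∞} {f : E → F}
    (hf : ContDiff ℝ n f) (h0 : ∀ x, f x ≠ 0) : ContDiff ℝ n fun y => ‖f y‖ :=
  hf.norm ℝ h0

section MagneticField

variable {B : E3 → E3}

theorem norm_bdir (hB0 : ∀ y, B y ≠ 0) (y : E3) : ‖bdir B y‖ = 1 := by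
  rw [bdir, norm_smul, norm_inv, norm_norm, inv_mul_cancel₀ (norm_ne_zero_iff.mpr (hB0 y))]

theorem norm_smul_bdir (hB0 : ∀ y, B y ≠ 0) (y : E3) : ‖B y‖ • bdir B y = B y := by
  rw [bdir, smul_inv_smul₀ (norm_ne_zero_iff.mpr (hB0 y))]

theorem contDiff_bdir (hB : ContDiff ℝ 2 B) (hB0 : ∀ y, B y ≠ 0) : ContDiff ℝ 2 (bdir B) := by
  unfold bdir
  fun_prop (disch := intros; simp [hB0])

theorem fderiv_norm_bdir_eq (hB : ContDiff ℝ 2 B) (hB0 : ∀ y, B y ≠ 0)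
    (hdiv : ∀ y, divg B y = 0) (y : E3) :
    fderiv ℝ (fun y => ‖B y‖) y (bdir B y) = -(‖B y‖ * divg (bdir B) y) := by
  have h := divg_smul (((hB.norm ℝ hB0).differentiable two_ne_zero) y)
    ((contDiff_bdir hB hB0).differentiable two_ne_zero y)
  simp only [norm_smul_bdir hB0, hdiv] at h
  linarith

end MagneticField

section GuidingCenter

variable (B : E3 → E3) (c : ℝ)

def parVel (x v : E3) : ℝ := ⟪v, bdir B x⟫

def perpVel (x v : E3) : E3 := v - parVel B x v • bdir B x

def gyroVel (x v : E3) : E3 := cross3 (perpVel B x v) (bdir B x)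

/-- The magnetic moment on phase space `(x, v)`, with the kinetic energy `‖v‖²` replaced by the
constant `c`; along a Lorentz trajectory the two agree. -/
def magneticMoment (p : E3 × E3) : ℝ := (c - parVel B p.1 p.2 ^ 2) / (2 * ‖B p.1‖)

/-- The corrector `Ψ` of the near-identity transformation `μ ↦ μ + Ψ / ω`: along the gyration
`v ↦ v + s (v × B)` the vectors `perpVel` and `gyroVel` rotate into each other at rate `‖B‖`,
and the three terms are chosen so that this rotation cancels the drift derivative of `μ`
(`fderiv_magneticMoment_drift_add_fderiv_momentCorrector_gyration`). -/
def momentCorrector (p : E3 × E3) : ℝ :=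
  -(parVel B p.1 p.2 / (2 * ‖B p.1‖ ^ 2)) *
      ⟪perpVel B p.1 p.2, fderiv ℝ (bdir B) p.1 (gyroVel B p.1 p.2)⟫
    - parVel B p.1 p.2 ^ 2 / ‖B p.1‖ ^ 2 * ⟪gyroVel B p.1 p.2, fderiv ℝ (bdir B) p.1 (bdir B p.1)⟫
    - (c - parVel B p.1 p.2 ^ 2) / (2 * ‖B p.1‖ ^ 3) *
      fderiv ℝ (fun y => ‖B y‖) p.1 (gyroVel B p.1 p.2)

variable {B}

theorem parVel_add_smul (x v z : E3) (s : ℝ) :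
    parVel B x (v + s • z) = parVel B x v + s * ⟪z, bdir B x⟫ := by
  simp only [parVel, inner_add_left, real_inner_smul_left]

theorem perpVel_add_smul_of_inner_eq_zero {x z : E3} (hz : ⟪z, bdir B x⟫ = 0) (v : E3) (s : ℝ) :
    perpVel B x (v + s • z) = perpVel B x v + s • z := by
  rw [perpVel, perpVel, parVel_add_smul, hz, mul_zero, add_zero]
  abel

theorem gyroVel_add_smul_of_inner_eq_zero {x z : E3} (hz : ⟪z, bdir B x⟫ = 0) (v : E3) (s : ℝ) :
    gyroVel B x (v + s • z) = gyroVel B x v + s • cross3 z (bdir B x) := by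
  rw [gyroVel, perpVel_add_smul_of_inner_eq_zero hz, cross3_add_smul_left, gyroVel]

theorem inner_cross3_bdir (x v : E3) : ⟪cross3 v (B x), bdir B x⟫ = 0 := by
  rw [bdir, real_inner_smul_right, inner_cross3_self, mul_zero]

theorem inner_perpVel_bdir (hB0 : ∀ y, B y ≠ 0) (x v : E3) : ⟪perpVel B x v, bdir B x⟫ = 0 := by
  rw [perpVel, inner_sub_left, real_inner_smul_left, real_inner_self_eq_norm_sq, norm_bdir hB0,
    parVel]
  ring

theorem perpVel_add_parVel_smul (x v : E3) : perpVel B x v + parVel B x v • bdir B x = v :=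
  sub_add_cancel _ _

theorem norm_perpVel_sq (hB0 : ∀ y, B y ≠ 0) (x v : E3) :
    ‖perpVel B x v‖ ^ 2 = ‖v‖ ^ 2 - parVel B x v ^ 2 := by
  have h := norm_add_sq_real (perpVel B x v) (parVel B x v • bdir B x)
  rw [perpVel_add_parVel_smul, real_inner_smul_right, inner_perpVel_bdir hB0, norm_smul,
    norm_bdir hB0, Real.norm_eq_abs, mul_one, sq_abs] at h
  linarith

theorem cross3_eq_norm_smul_gyroVel (hB0 : ∀ y, B y ≠ 0) (x v : E3) :
    cross3 v (B x) = ‖B x‖ • gyroVel B x v := by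
  conv_lhs => rw [← norm_smul_bdir hB0 x, ← perpVel_add_parVel_smul (B := B) x v]
  rw [cross3_smul_right, cross3_add_smul_left, cross3_self, smul_zero, add_zero, gyroVel]

theorem cross3_gyroVel_bdir (hB0 : ∀ y, B y ≠ 0) (x v : E3) :
    cross3 (gyroVel B x v) (bdir B x) = -perpVel B x v := by
  rw [gyroVel, cross3_cross3_left, inner_perpVel_bdir hB0, real_inner_self_eq_norm_sq,
    norm_bdir hB0]
  simp

end GuidingCenter

section Derivatives

variable {B : E3 → E3} (hB : ContDiff ℝ 2 B) (hB0 : ∀ y, B y ≠ 0) (c : ℝ)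
include hB hB0

theorem contDiff_magneticMoment : ContDiff ℝ 2 (magneticMoment B c) := by
  have := contDiff_bdir hB hB0
  unfold magneticMoment parVel
  fun_prop (disch := intros; simp [hB0])

theorem contDiff_momentCorrector : ContDiff ℝ 1 (momentCorrector B c) := by
  have := contDiff_bdir hB hB0
  unfold momentCorrector gyroVel perpVel parVel
  fun_prop (disch := intros; simp [hB0])

theorem fderiv_magneticMoment_gyration (x v : E3) :
    fderiv ℝ (magneticMoment B c) (x, v) (0, cross3 v (B x)) = 0 := by
  have hconst : (fun s : ℝ => magneticMoment B c ((x, v) + s • (0, cross3 v (B x)))) =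
      fun _ => magneticMoment B c (x, v) := by
    funext s
    simp [magneticMoment, parVel_add_smul, inner_cross3_bdir]
  rw [← ((contDiff_magneticMoment hB hB0 c).differentiable two_ne_zero _).lineDeriv_eq_fderiv,
    lineDeriv, hconst, deriv_const]

theorem fderiv_magneticMoment_drift (x v : E3) :
    fderiv ℝ (magneticMoment B c) (x, v) (v, 0) =
      -(parVel B x v * ⟪v, fderiv ℝ (bdir B) x v⟫) / ‖B x‖
        - (c - parVel B x v ^ 2) * fderiv ℝ (fun y => ‖B y‖) x v / (2 * ‖B x‖ ^ 2) := by
  have hb : HasDerivAt (fun s : ℝ => bdir B (x + s • v)) (fderiv ℝ (bdir B) x v) 0 :=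
    ((contDiff_bdir hB hB0).differentiable two_ne_zero x).hasFDerivAt.hasLineDerivAt v
  have hn : HasDerivAt (fun s : ℝ => ‖B (x + s • v)‖) (fderiv ℝ (fun y => ‖B y‖) x v) 0 :=
    (((hB.norm ℝ hB0).differentiable two_ne_zero) x).hasFDerivAt.hasLineDerivAt v
  have hμ := ((((hasDerivAt_const (0 : ℝ) v).inner ℝ hb).pow 2).const_sub c).div
    (hn.const_mul 2) (by simp [hB0])
  have hline : (fun s : ℝ => magneticMoment B c ((x, v) + s • (v, 0))) =
      fun s => (c - ⟪v, bdir B (x + s • v)⟫ ^ 2) / (2 * ‖B (x + s • v)‖) := by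
    funext s
    simp [magneticMoment, parVel]
  rw [← ((contDiff_magneticMoment hB hB0 c).differentiable two_ne_zero _).lineDeriv_eq_fderiv]
  refine HasLineDerivAt.lineDeriv ?_
  rw [HasLineDerivAt, hline]
  refine hμ.congr_deriv ?_
  have := norm_ne_zero_iff.mpr (hB0 x)
  simp only [parVel, zero_smul, add_zero, inner_zero_left, Pi.pow_apply]
  field_simp
  ring

theorem fderiv_momentCorrector_gyration (x v : E3) :
    fderiv ℝ (momentCorrector B c) (x, v) (0, cross3 v (B x)) =
      -(parVel B x v / (2 * ‖B x‖)) *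
          (⟪gyroVel B x v, fderiv ℝ (bdir B) x (gyroVel B x v)⟫
            - ⟪perpVel B x v, fderiv ℝ (bdir B) x (perpVel B x v)⟫)
        + parVel B x v ^ 2 / ‖B x‖ * ⟪perpVel B x v, fderiv ℝ (bdir B) x (bdir B x)⟫
        + (c - parVel B x v ^ 2) / (2 * ‖B x‖ ^ 2) *
          fderiv ℝ (fun y => ‖B y‖) x (perpVel B x v) := by
  have hz : ⟪cross3 v (B x), bdir B x⟫ = 0 := inner_cross3_bdir x v
  have hzb : cross3 (cross3 v (B x)) (bdir B x) = -(‖B x‖ • perpVel B x v) := by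
    rw [cross3_eq_norm_smul_gyroVel hB0, cross3_smul_left, cross3_gyroVel_bdir hB0, smul_neg]
  have hline : (fun s : ℝ => momentCorrector B c ((x, v) + s • (0, cross3 v (B x)))) = fun s =>
      -(parVel B x v / (2 * ‖B x‖ ^ 2)) *
          ⟪perpVel B x v + s • cross3 v (B x),
            fderiv ℝ (bdir B) x (gyroVel B x v + s • -(‖B x‖ • perpVel B x v))⟫
        - parVel B x v ^ 2 / ‖B x‖ ^ 2 *
          ⟪gyroVel B x v + s • -(‖B x‖ • perpVel B x v), fderiv ℝ (bdir B) x (bdir B x)⟫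
        - (c - parVel B x v ^ 2) / (2 * ‖B x‖ ^ 3) *
          fderiv ℝ (fun y => ‖B y‖) x (gyroVel B x v + s • -(‖B x‖ • perpVel B x v)) := by
    funext s
    simp [momentCorrector, parVel_add_smul, hz, perpVel_add_smul_of_inner_eq_zero hz,
      gyroVel_add_smul_of_inner_eq_zero hz, hzb]
  set d := -(‖B x‖ • perpVel B x v)
  have hU : HasDerivAt (fun s : ℝ => perpVel B x v + s • cross3 v (B x)) (cross3 v (B x)) 0 :=
    (hasFDerivAt_id _).hasLineDerivAt _
  have hW : HasDerivAt (fun s : ℝ => gyroVel B x v + s • d) d 0 :=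
    (hasFDerivAt_id _).hasLineDerivAt _
  have hQW : HasDerivAt (fun s : ℝ => fderiv ℝ (bdir B) x (gyroVel B x v + s • d))
      (fderiv ℝ (bdir B) x d) 0 :=
    (fderiv ℝ (bdir B) x).hasFDerivAt.hasLineDerivAt d
  have hNW : HasDerivAt (fun s : ℝ => fderiv ℝ (fun y => ‖B y‖) x (gyroVel B x v + s • d))
      (fderiv ℝ (fun y => ‖B y‖) x d) 0 :=
    (fderiv ℝ (fun y => ‖B y‖) x).hasFDerivAt.hasLineDerivAt d
  have hΨ := (((hU.inner ℝ hQW).const_mul (-(parVel B x v / (2 * ‖B x‖ ^ 2)))).sub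
      ((hW.inner ℝ (hasDerivAt_const _ (fderiv ℝ (bdir B) x (bdir B x)))).const_mul
        (parVel B x v ^ 2 / ‖B x‖ ^ 2))).sub
      (hNW.const_mul ((c - parVel B x v ^ 2) / (2 * ‖B x‖ ^ 3)))
  rw [← ((contDiff_momentCorrector hB hB0 c).differentiable one_ne_zero _).lineDeriv_eq_fderiv]
  refine HasLineDerivAt.lineDeriv ?_
  rw [HasLineDerivAt, hline]
  refine hΨ.congr_deriv ?_
  have := norm_ne_zero_iff.mpr (hB0 x)
  simp only [d, zero_smul, add_zero, inner_zero_right, cross3_eq_norm_smul_gyroVel hB0, map_neg,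
    map_smul, inner_neg_left, inner_neg_right, real_inner_smul_left, real_inner_smul_right,
    smul_eq_mul]
  field_simp
  ring

theorem fderiv_magneticMoment_drift_add_fderiv_momentCorrector_gyration
    (hdiv : ∀ y, divg B y = 0) {x v : E3} (hv : ‖v‖ ^ 2 = c) :
    fderiv ℝ (magneticMoment B c) (x, v) (v, 0)
      + fderiv ℝ (momentCorrector B c) (x, v) (0, cross3 v (B x)) = 0 := by
  rw [fderiv_magneticMoment_drift hB hB0, fderiv_momentCorrector_gyration hB hB0]
  have hbQ : ∀ z, ⟪bdir B x, fderiv ℝ (bdir B) x z⟫ = 0 :=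
    inner_fderiv_eq_zero_of_norm_eq_one ((contDiff_bdir hB hB0).differentiable two_ne_zero x)
      (norm_bdir hB0)
  have hframe : ⟪perpVel B x v, fderiv ℝ (bdir B) x (perpVel B x v)⟫
      + ⟪gyroVel B x v, fderiv ℝ (bdir B) x (gyroVel B x v)⟫
      + ‖perpVel B x v‖ ^ 2 * ⟪bdir B x, fderiv ℝ (bdir B) x (bdir B x)⟫
      = ‖perpVel B x v‖ ^ 2 * divg (bdir B) x :=
    trace_eq_frame_sum _ (inner_perpVel_bdir hB0 x v) (norm_bdir hB0 x)
  rw [hbQ, norm_perpVel_sq hB0, hv] at hframe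
  have hNb := fderiv_norm_bdir_eq hB hB0 hdiv x
  set h := parVel B x v
  set u := perpVel B x v
  set Q := fderiv ℝ (bdir B) x
  set N := fderiv ℝ (fun y => ‖B y‖) x
  have hv_split : v = u + h • bdir B x := (perpVel_add_parVel_smul x v).symm
  have hA : ⟪v, Q v⟫ = ⟪u, Q u⟫ + h * ⟪u, Q (bdir B x)⟫ := by
    conv_lhs => rw [hv_split]
    simp only [map_add, map_smul, inner_add_left, inner_add_right, real_inner_smul_left,
      real_inner_smul_right, hbQ]
    ring
  have hNv : N v = N u + h * N (bdir B x) := by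
    conv_lhs => rw [hv_split]
    simp only [map_add, map_smul, smul_eq_mul]
  rw [hA, hNv, hNb]
  have := norm_ne_zero_iff.mpr (hB0 x)
  field_simp
  linear_combination (-(h * ‖B x‖)) * hframe

end Derivatives

/-- `μ + Ψ / ω` has derivative `DΨ·a / ω` along `γ`, and `Ψ / ω` is itself `O(1 / ω)`. -/
theorem abs_sub_le_of_homological {P : Type*} [NormedAddCommGroup P] [NormedSpace ℝ P]
    {μ Ψ : P → ℝ} {a f : P → P} {γ : ℝ → P} {ω T CG CΨ t : ℝ} (hω : 0 < ω)
    (hμ : Differentiable ℝ μ) (hΨ : Differentiable ℝ Ψ)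
    (hγ : ∀ s, HasDerivAt γ (a (γ s) + ω • f (γ s)) s)
    (hμf : ∀ s, fderiv ℝ μ (γ s) (f (γ s)) = 0)
    (hhom : ∀ s, fderiv ℝ μ (γ s) (a (γ s)) + fderiv ℝ Ψ (γ s) (f (γ s)) = 0)
    (hG : ∀ s ∈ Set.Icc 0 T, |fderiv ℝ Ψ (γ s) (a (γ s))| ≤ CG)
    (hΨb : ∀ s ∈ Set.Icc 0 T, |Ψ (γ s)| ≤ CΨ) (ht : t ∈ Set.Icc 0 T) :
    |μ (γ t) - μ (γ 0)| ≤ (CG * T + 2 * CΨ) / ω := by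
  have hF : ∀ s, HasDerivAt (fun s => μ (γ s) + ω⁻¹ * Ψ (γ s))
      (ω⁻¹ * fderiv ℝ Ψ (γ s) (a (γ s))) s := fun s => by
    refine (((hμ _).hasFDerivAt.comp_hasDerivAt s (hγ s)).add
      (((hΨ _).hasFDerivAt.comp_hasDerivAt s (hγ s)).const_mul ω⁻¹)).congr_deriv ?_
    simp only [map_add, map_smul, smul_eq_mul, hμf, mul_zero, add_zero]
    field_simp
    linear_combination ω * hhom s
  have hdrift := norm_image_sub_le_of_norm_deriv_le_segment' (fun s _ => (hF s).hasDerivWithinAt)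
    (fun s hs => by
      rw [Real.norm_eq_abs, abs_mul, abs_inv, abs_of_pos hω]
      exact mul_le_mul_of_nonneg_left (hG s (Set.Ico_subset_Icc_self hs)) (by positivity)) t ht
  rw [Real.norm_eq_abs, sub_zero] at hdrift
  have hCG : 0 ≤ CG := (abs_nonneg _).trans (hG 0 ⟨le_rfl, ht.1.trans ht.2⟩)
  have hΨt := abs_le.mp (hΨb t ht)
  have hΨ0 := abs_le.mp (hΨb 0 ⟨le_rfl, ht.1.trans ht.2⟩)
  have hCGt : ω⁻¹ * CG * t ≤ ω⁻¹ * CG * T := by gcongr; exact ht.2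
  rw [abs_le] at hdrift ⊢
  rw [div_eq_inv_mul]
  constructor <;> nlinarith [inv_pos.mpr hω]

section Lorentz

variable {B : E3 → E3} {ω : ℝ} {x₀ v₀ : E3} {x : ℝ → E3}

theorem IsLorentzSol.norm_deriv (hx : IsLorentzSol B ω x₀ v₀ x) (t : ℝ) : ‖deriv x t‖ = ‖v₀‖ := by
  have hconst : ∀ s, HasDerivAt (fun s => ‖deriv x s‖ ^ 2) 0 s := fun s => by
    simpa [real_inner_smul_right, inner_self_cross3] using (hx.2.2.2 s).norm_sq
  have := is_const_of_deriv_eq_zero (fun s => (hconst s).differentiableAt)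
    (fun s => (hconst s).deriv) t 0
  rwa [hx.2.1, pow_left_inj₀ (norm_nonneg _) (norm_nonneg _) two_ne_zero] at this

theorem IsLorentzSol.hasDerivAt_prod (hx : IsLorentzSol B ω x₀ v₀ x) (t : ℝ) :
    HasDerivAt (fun s => (x s, deriv x s))
      ((deriv x t, 0) + ω • (0, cross3 (deriv x t) (B (x t)))) t := by
  simpa using (hx.2.2.1 t).hasDerivAt.prodMk (hx.2.2.2 t)

theorem IsLorentzSol.mem_closedBall (hx : IsLorentzSol B ω x₀ v₀ x) {T t : ℝ}
    (ht : t ∈ Set.Icc 0 T) : x t ∈ Metric.closedBall x₀ (‖v₀‖ * T) := by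
  have h := norm_image_sub_le_of_norm_deriv_le_segment'
    (fun s _ => (hx.2.2.1 s).hasDerivAt.hasDerivWithinAt) (fun s _ => (hx.norm_deriv s).le) t ht
  rw [hx.1, sub_zero] at h
  rw [Metric.mem_closedBall, dist_eq_norm]
  exact h.trans (mul_le_mul_of_nonneg_left ht.2 (norm_nonneg _))

theorem IsLorentzSol.abs_magneticMoment_sub_le (hB : ContDiff ℝ 2 B) (hB0 : ∀ y, B y ≠ 0)
    (hdiv : ∀ y, divg B y = 0) (hx : IsLorentzSol B ω x₀ v₀ x) (hω : 0 < ω) {T CG CΨ t : ℝ}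
    (hCG : ∀ p ∈ Metric.closedBall x₀ (‖v₀‖ * T) ×ˢ Metric.sphere 0 ‖v₀‖,
      |fderiv ℝ (momentCorrector B (‖v₀‖ ^ 2)) p (p.2, 0)| ≤ CG)
    (hCΨ : ∀ p ∈ Metric.closedBall x₀ (‖v₀‖ * T) ×ˢ Metric.sphere 0 ‖v₀‖,
      |momentCorrector B (‖v₀‖ ^ 2) p| ≤ CΨ) (ht : t ∈ Set.Icc 0 T) :
    |magneticMoment B (‖v₀‖ ^ 2) (x t, deriv x t) - magneticMoment B (‖v₀‖ ^ 2) (x₀, v₀)| ≤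
      (CG * T + 2 * CΨ) / ω := by
  have hmem : ∀ s ∈ Set.Icc 0 T,
      (x s, deriv x s) ∈ Metric.closedBall x₀ (‖v₀‖ * T) ×ˢ Metric.sphere 0 ‖v₀‖ :=
    fun s hs => ⟨hx.mem_closedBall hs, by simp [hx.norm_deriv s]⟩
  have h := abs_sub_le_of_homological (a := fun p => (p.2, 0))
    (f := fun p => (0, cross3 p.2 (B p.1))) hω
    ((contDiff_magneticMoment hB hB0 _).differentiable two_ne_zero)
    ((contDiff_momentCorrector hB hB0 _).differentiable one_ne_zero)
    hx.hasDerivAt_prod (fun s => fderiv_magneticMoment_gyration hB hB0 _ _ _)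
    (fun s => fderiv_magneticMoment_drift_add_fderiv_momentCorrector_gyration hB hB0 _ hdiv
      (by rw [hx.norm_deriv]))
    (fun s hs => hCG _ (hmem s hs)) (fun s hs => hCΨ _ (hmem s hs)) ht
  rwa [hx.1, hx.2.1] at h

end Lorentz

theorem adiabatic_invariance_of_magnetic_moment
    (B : E3 → E3) (hB : IsCkBounded 2 B) (hdiv : ∀ y : E3, divg B y = 0)
    (hB0 : ∀ y : E3, B y ≠ 0) (x₀ v₀ : E3)
    (xω : ℝ → ℝ → E3) (hxω : ∀ ω : ℝ, 0 < ω → IsLorentzSol B ω x₀ v₀ (xω ω)) :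
    ∀ T > (0:ℝ),
      Tendsto (fun ω : ℝ => ⨆ t : Set.Icc (0:ℝ) T,
          |(‖v₀‖ ^ 2 - (inner ℝ (deriv (xω ω) t.1) (bdir B (xω ω t.1)) : ℝ) ^ 2)
              / (2 * ‖B (xω ω t.1)‖)
            - (‖v₀‖ ^ 2 - (inner ℝ v₀ (bdir B x₀) : ℝ) ^ 2) / (2 * ‖B x₀‖)|)
        atTop (𝓝 0) := by
  intro T hT
  have hΨ := contDiff_momentCorrector hB.1 hB0 (‖v₀‖ ^ 2)
  have hK := (isCompact_closedBall x₀ (‖v₀‖ * T)).prod (isCompact_sphere (0 : E3) ‖v₀‖)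
  obtain ⟨CG, hCG⟩ := hK.exists_bound_of_continuousOn
    ((hΨ.continuous_fderiv one_ne_zero).clm_apply
      (continuous_snd.prodMk (continuous_const (y := (0 : E3))))).continuousOn
  obtain ⟨CΨ, hCΨ⟩ := hK.exists_bound_of_continuousOn hΨ.continuous.continuousOn
  have hx₀ : (x₀, v₀) ∈ Metric.closedBall x₀ (‖v₀‖ * T) ×ˢ Metric.sphere 0 ‖v₀‖ :=
    ⟨Metric.mem_closedBall_self (by positivity), by simp⟩
  have hCG₀ : 0 ≤ CG := (norm_nonneg _).trans (hCG _ hx₀)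
  have hCΨ₀ : 0 ≤ CΨ := (norm_nonneg _).trans (hCΨ _ hx₀)
  refine squeeze_zero' (.of_forall fun ω => Real.iSup_nonneg fun _ => abs_nonneg _) ?_
    ((tendsto_const_nhds (x := CG * T + 2 * CΨ)).div_atTop tendsto_id)
  filter_upwards [eventually_gt_atTop 0] with ω hω
  exact Real.iSup_le (fun t => (hxω ω hω).abs_magneticMoment_sub_le hB.1 hB0 hdiv hω hCG hCΨ t.2)
    (by positivity)
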